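/- The number of extreme points of conv(S^U) is exactly 2^{n-1} Σ_{i=1}^n u_i. -/

import Mathlib

/-!
An extreme point of `conv S` lies in `S` and admits no symmetric perturbation `w ± d` inside `S`.
Perturbing `y` alone shows that `∑ x_i y_i = r`, that `y` is supported on a single index `t`, and
that `x_t ≥ 1`; perturbing `x_j` by `±1` for `j ≠ t` shows `x_j ∈ {0, u_j}`. So every extreme
point is a `vertex r u t p J` with `1 ≤ p ≤ u_t` and `J ⊆ [n] \ {t}` the indices with `x_j = u_j`.
Conversely each such vertex is the unique maximiser over `S` of the linear functional
`-(r/p²) x_t - y_t + ∑_{j ≠ t} (±x_j - (3 u_j + 1) y_j)`, with sign `+` exactly on `J`: when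
`x_t ≥ 1` this is the tangent-line inequality `(r/p²) a + r/a ≥ 2r/p`, and when `x_t = 0` the
heavy weights on the `y_j` make the covering constraint too expensive. Counting the triples
`(t, p, J)` gives `2^(n-1) ∑_t u_t`.
-/

open Finset

section Convex

variable {𝕜 E : Type*} [Field 𝕜] [LinearOrder 𝕜] [IsStrictOrderedRing 𝕜] [AddCommGroup E]
  [Module 𝕜 E]

theorem mem_extremePoints_convexHull_of_forall_le_imp_eq {S : Set E} {z : E} (l : E →ₗ[𝕜] 𝕜)
    (hz : z ∈ S) (hmax : ∀ w ∈ S, l z ≤ l w → w = z) :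
    z ∈ (convexHull 𝕜 S).extremePoints 𝕜 := by
  have hlt : ∀ w ∈ S \ {z}, l w < l z := fun w hw =>
    lt_of_not_ge fun h => hw.2 (hmax w hw.1 h)
  have hhull : ∀ w ∈ convexHull 𝕜 S, w = z ∨ l w < l z := by
    intro w hw
    rcases (S \ {z}).eq_empty_or_nonempty with hS | hS
    · rw [Set.sdiff_eq_empty] at hS
      exact Or.inl (convexHull_min hS (convex_singleton z) hw)
    rw [← Set.insert_eq_of_mem hz, ← Set.insert_sdiff_singleton, convexHull_insert hS,
      convexJoin_singleton_left, Set.mem_iUnion₂] at hw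
    obtain ⟨c, hc, a, b, ha, hb, hab, rfl⟩ := hw
    have hcz : l c < l z := convexHull_min hlt (convex_halfSpace_lt l.isLinear _) hc
    rcases hb.eq_or_lt with rfl | hb
    · left
      simp [show a = 1 by linarith]
    · right
      rw [map_add, map_smul, map_smul, smul_eq_mul, smul_eq_mul, show a = 1 - b by linarith]
      nlinarith
  have hle : ∀ w ∈ convexHull 𝕜 S, l w ≤ l z := fun w hw =>
    (hhull w hw).elim (fun h => h ▸ le_rfl) le_of_lt
  refine mem_extremePoints.2 ⟨subset_convexHull 𝕜 S hz,
    fun x₁ hx₁ x₂ hx₂ ⟨a, b, ha, hb, hab, hz'⟩ => ?_⟩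
  have hl : a * l x₁ + b * l x₂ = l z := by
    rw [← hz', map_add, map_smul, map_smul, smul_eq_mul, smul_eq_mul]
  refine ⟨(hhull x₁ hx₁).resolve_right fun h => ?_, (hhull x₂ hx₂).resolve_right fun h => ?_⟩
  · nlinarith [hle x₂ hx₂, congrArg (· * l z) hab]
  · nlinarith [hle x₁ hx₁, congrArg (· * l z) hab]

theorem eq_zero_of_add_mem_of_sub_mem_of_mem_extremePoints {A : Set E} {x d : E}
    (hx : x ∈ A.extremePoints 𝕜) (h₁ : x + d ∈ A) (h₂ : x - d ∈ A) : d = 0 := by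
  have hmid : x ∈ openSegment 𝕜 (x + d) (x - d) :=
    ⟨1 / 2, 1 / 2, by norm_num, by norm_num, by norm_num, by module⟩
  simpa using hx.2 h₁ h₂ hmid

end Convex

section BilinearCover

variable {n : ℕ}

theorem sum_mul_single {ι R : Type*} [Fintype ι] [DecidableEq ι] [NonUnitalNonAssocSemiring R]
    (x : ι → R) (t : ι) (c : R) : ∑ j, x j * (Pi.single t c : ι → R) j = x t * c :=
  dotProduct_single (v := x) c t

def bilinearCoverSet (r : ℝ) (u : Fin n → ℕ) : Set ((Fin n → ℝ) × (Fin n → ℝ)) :=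
  {p | (∀ i, ∃ m : ℕ, p.1 i = (m : ℝ)) ∧ (∀ i, 0 ≤ p.2 i) ∧
      (∀ i, p.1 i ≤ (u i : ℝ)) ∧ r ≤ ∑ i, p.1 i * p.2 i}

noncomputable def vertex (r : ℝ) (u : Fin n → ℕ) (t : Fin n) (p : ℕ) (J : Finset (Fin n)) :
    (Fin n → ℝ) × (Fin n → ℝ) :=
  (fun j => if j = t then (p : ℝ) else if j ∈ J then (u j : ℝ) else 0, Pi.single t (r / p))

def vertexIndex (u : Fin n → ℕ) : Finset (Σ _ : Fin n, ℕ × Finset (Fin n)) :=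
  univ.sigma fun t => Icc 1 (u t) ×ˢ (univ.erase t).powerset

theorem card_vertexIndex (u : Fin n → ℕ) : #(vertexIndex u) = 2 ^ (n - 1) * ∑ i, u i := by
  simp [vertexIndex, card_sigma, ← sum_mul, mul_comm]

theorem vertex_injOn {r : ℝ} (hr : r ≠ 0) {u : Fin n → ℕ} (hu : ∀ i, 1 ≤ u i) :
    Set.InjOn (fun i : Σ _ : Fin n, ℕ × Finset (Fin n) => vertex r u i.1 i.2.1 i.2.2)
      (vertexIndex u) := by
  rintro ⟨t, p, J⟩ hi ⟨t', p', J'⟩ hi' h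
  simp only [vertexIndex, coe_sigma, Set.mem_sigma_iff, coe_product, Set.mem_prod, mem_coe,
    mem_Icc, mem_powerset] at hi hi'
  simp only [vertex, Prod.mk.injEq, funext_iff] at h
  obtain ⟨hx, hy⟩ := h
  obtain rfl : t = t' := by
    by_contra htt
    have hp : p ≠ 0 := Nat.one_le_iff_ne_zero.1 hi.2.1.1
    simpa [htt, hr, hp] using hy t
  obtain rfl : p = p' := by exact_mod_cast (by simpa using hx t)
  obtain rfl : J = J' := by
    ext j
    by_cases hj : j = t
    · subst hj
      exact iff_of_false (fun h => by simpa using hi.2.2 h) (fun h => by simpa using hi'.2.2 h)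
    · have hxj := hx j
      have hu0 : (u j : ℝ) ≠ 0 := by have := hu j; positivity
      rw [if_neg hj, if_neg hj] at hxj
      split_ifs at hxj with h h' h' <;> simp_all
  rfl

section Vertex

variable {r : ℝ} {u : Fin n → ℕ} {t : Fin n} {p : ℕ} {J : Finset (Fin n)} {x y : Fin n → ℝ}

theorem mem_bilinearCoverSet : (x, y) ∈ bilinearCoverSet r u ↔ (∀ i, ∃ m : ℕ, x i = m) ∧
    (∀ i, 0 ≤ y i) ∧ (∀ i, x i ≤ u i) ∧ r ≤ ∑ i, x i * y i := Iff.rfl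

theorem fst_nonneg_of_mem_bilinearCoverSet (hw : (x, y) ∈ bilinearCoverSet r u) (i : Fin n) :
    0 ≤ x i := by
  obtain ⟨m, hm⟩ := (mem_bilinearCoverSet.1 hw).1 i
  rw [hm]
  positivity

theorem vertex_mem_bilinearCoverSet (hr : 0 ≤ r) (hp : p ∈ Icc 1 (u t)) (J : Finset (Fin n)) :
    vertex r u t p J ∈ bilinearCoverSet r u := by
  rw [mem_Icc] at hp
  have hp0 : (p : ℝ) ≠ 0 := by have := hp.1; positivity
  refine ⟨fun i => ?_, fun i => ?_, fun i => ?_, ?_⟩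
  · by_cases hi : i = t
    · exact ⟨p, by simp [vertex, hi]⟩
    · by_cases hJ : i ∈ J
      · exact ⟨u i, by simp [vertex, hi, hJ]⟩
      · exact ⟨0, by simp [vertex, hi, hJ]⟩
  · simp only [vertex, Pi.single_apply]
    split_ifs <;> positivity
  · simp only [vertex]
    split_ifs with hi
    · subst hi; exact_mod_cast hp.2
    · rfl
    · positivity
  · simp only [vertex]
    rw [sum_mul_single, if_pos rfl, mul_div_cancel₀ _ hp0]

theorem eq_vertex (hxt : x t = p) (hyt : y t = r / p)
    (hx : ∀ j ≠ t, x j = if j ∈ J then (u j : ℝ) else 0) (hy : ∀ j ≠ t, y j = 0) :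
    (x, y) = vertex r u t p J := by
  refine Prod.ext (funext fun j => ?_) (funext fun j => ?_)
  · rcases eq_or_ne j t with rfl | hjt
    · simp [vertex, hxt]
    · simp [vertex, hjt, hx j hjt]
  · rcases eq_or_ne j t with rfl | hjt
    · simp [vertex, hyt]
    · simp [vertex, hjt, hy j hjt]

noncomputable def vertexFunctional (r : ℝ) (u : Fin n → ℕ) (t : Fin n) (p : ℕ)
    (J : Finset (Fin n)) : (Fin n → ℝ) × (Fin n → ℝ) →ₗ[ℝ] ℝ :=
  let X (j : Fin n) := LinearMap.proj j ∘ₗ LinearMap.fst ℝ (Fin n → ℝ) (Fin n → ℝ)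
  let Y (j : Fin n) := LinearMap.proj j ∘ₗ LinearMap.snd ℝ (Fin n → ℝ) (Fin n → ℝ)
  ∑ j ∈ univ.erase t, ((if j ∈ J then 1 else -1 : ℝ) • X j - (3 * u j + 1 : ℝ) • Y j) -
    (r / p ^ 2) • X t - Y t

theorem vertexFunctional_apply (w : (Fin n → ℝ) × (Fin n → ℝ)) :
    vertexFunctional r u t p J w =
      ∑ j ∈ univ.erase t, ((if j ∈ J then 1 else -1) * w.1 j - (3 * u j + 1) * w.2 j) -
        r / p ^ 2 * w.1 t - w.2 t := by
  simp only [vertexFunctional, LinearMap.sub_apply, LinearMap.coe_sum, Finset.sum_apply,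
    LinearMap.smul_apply, LinearMap.comp_apply, LinearMap.fst_apply, LinearMap.snd_apply,
    LinearMap.proj_apply, smul_eq_mul]

theorem vertexFunctional_vertex_sub (hp : p ≠ 0) :
    vertexFunctional r u t p J (vertex r u t p J) - vertexFunctional r u t p J (x, y) =
      ∑ j ∈ univ.erase t, ((if j ∈ J then u j - x j else x j) + (3 * u j + 1) * y j) +
        r / p ^ 2 * x t + y t - 2 * r / p := by
  have hE : ∑ j ∈ univ.erase t, ((if j ∈ J then 1 else -1) * (vertex r u t p J).1 j -
        (3 * u j + 1) * (vertex r u t p J).2 j) -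
      ∑ j ∈ univ.erase t, ((if j ∈ J then 1 else -1) * x j - (3 * u j + 1) * y j) =
      ∑ j ∈ univ.erase t, ((if j ∈ J then u j - x j else x j) + (3 * u j + 1) * y j) := by
    rw [← sum_sub_distrib]
    refine sum_congr rfl fun j hj => ?_
    have hjt := ne_of_mem_erase hj
    simp only [vertex, if_neg hjt, Pi.single_eq_of_ne hjt]
    split_ifs <;> ring
  have hxt : (vertex r u t p J).1 t = p := if_pos rfl
  have hyt : (vertex r u t p J).2 t = r / p := Pi.single_eq_same _ _
  have hp0 : (p : ℝ) ≠ 0 := Nat.cast_ne_zero.2 hp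
  rw [vertexFunctional_apply, vertexFunctional_apply, ← hE, hxt, hyt]
  field_simp
  ring

theorem vertexFunctional_lt_of_fst_eq_zero (hr : 0 < r) (hp : 1 ≤ p)
    (hw : (x, y) ∈ bilinearCoverSet r u) (hxt : x t = 0) :
    vertexFunctional r u t p J (x, y) < vertexFunctional r u t p J (vertex r u t p J) := by
  obtain ⟨-, hy, hxu, hsum⟩ := mem_bilinearCoverSet.1 hw
  have hsplit : ∑ j, x j * y j = ∑ j ∈ univ.erase t, x j * y j := by
    rw [← add_sum_erase _ _ (mem_univ t), hxt, zero_mul, zero_add]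
  -- the weights `3 u j + 1` outweigh the `2 r / p ≤ 2 r` that the vertex gains at `t`
  have h3 : 3 * ∑ j ∈ univ.erase t, x j * y j ≤ ∑ j ∈ univ.erase t,
      ((if j ∈ J then (u j : ℝ) - x j else x j) + (3 * u j + 1) * y j) := by
    rw [mul_sum]
    refine sum_le_sum fun j _ => ?_
    have := fst_nonneg_of_mem_bilinearCoverSet hw j
    split_ifs <;> nlinarith [hy j, hxu j]
  have h2 : 2 * r / p ≤ 2 * r := div_le_self (by positivity) (by exact_mod_cast hp)
  rw [← sub_pos, vertexFunctional_vertex_sub (p := p) (by omega), hxt, mul_zero]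
  linarith [hy t]

theorem vertexFunctional_gap_lower_bound (hp : 1 ≤ p) (hw : (x, y) ∈ bilinearCoverSet r u)
    (hxt : 1 ≤ x t) :
    x t * ∑ j ∈ univ.erase t, (if j ∈ J then (u j : ℝ) - x j else x j) +
        ∑ j ∈ univ.erase t, y j + r / p ^ 2 * (x t - p) ^ 2 + (∑ j, x j * y j - r) ≤
      x t * (vertexFunctional r u t p J (vertex r u t p J) -
        vertexFunctional r u t p J (x, y)) := by
  obtain ⟨-, hy, hxu, -⟩ := mem_bilinearCoverSet.1 hw
  have hp0 : (p : ℝ) ≠ 0 := by positivity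
  have hweights : ∑ j ∈ univ.erase t, y j + ∑ j ∈ univ.erase t, x j * y j ≤
      x t * ∑ j ∈ univ.erase t, (3 * u j + 1) * y j := by
    rw [← sum_add_distrib, mul_sum]
    refine sum_le_sum fun j _ => ?_
    nlinarith [hy j, hxu j, mul_le_mul_of_nonneg_right hxt (hy j)]
  have hsplit : ∑ j, x j * y j = x t * y t + ∑ j ∈ univ.erase t, x j * y j :=
    (add_sum_erase _ _ (mem_univ t)).symm
  rw [vertexFunctional_vertex_sub (p := p) (by omega), sum_add_distrib]
  have hsq : r / p ^ 2 * (x t - p) ^ 2 = r / p ^ 2 * x t ^ 2 - 2 * r / p * x t + r := by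
    field_simp
    ring
  nlinarith

theorem eq_vertex_of_vertexFunctional_le (hr : 0 < r) (hp : 1 ≤ p)
    (hw : (x, y) ∈ bilinearCoverSet r u)
    (hle : vertexFunctional r u t p J (vertex r u t p J) ≤ vertexFunctional r u t p J (x, y)) :
    (x, y) = vertex r u t p J := by
  obtain ⟨hint, hy, hxu, hsum⟩ := mem_bilinearCoverSet.1 hw
  obtain ⟨m, hm⟩ := hint t
  rcases Nat.eq_zero_or_pos m with rfl | hm1
  · exact absurd hle (not_le.2 (vertexFunctional_lt_of_fst_eq_zero hr hp hw (by simpa using hm)))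
  have hxt : 1 ≤ x t := by rw [hm]; exact_mod_cast hm1
  have hbound := (vertexFunctional_gap_lower_bound (J := J) hp hw hxt).trans
    (mul_nonpos_of_nonneg_of_nonpos (by linarith) (sub_nonpos.2 hle))
  have hd : ∀ j, 0 ≤ if j ∈ J then (u j : ℝ) - x j else x j := fun j => by
    split_ifs
    · linarith [hxu j]
    · exact fst_nonneg_of_mem_bilinearCoverSet hw j
  -- each of the four nonnegative terms of the lower bound must vanish
  have hD := sum_nonneg fun j (_ : j ∈ univ.erase t) => hd j
  have hY := sum_nonneg fun j (_ : j ∈ univ.erase t) => hy j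
  have hQ : 0 ≤ r / p ^ 2 * (x t - p) ^ 2 := by positivity
  have hS1 := mul_le_mul_of_nonneg_right hxt hD
  have hdj := (sum_eq_zero_iff_of_nonneg fun j _ => hd j).1 (by linarith)
  have hyj := (sum_eq_zero_iff_of_nonneg fun j _ => hy j).1 (by linarith)
  have hxtp : x t = p := by
    have : r / p ^ 2 * (x t - p) ^ 2 = 0 := by linarith
    have hrp : r / p ^ 2 ≠ 0 := by positivity
    simpa [hrp, sub_eq_zero] using this
  have hyt : x t * y t = r := by
    have hsplit := (add_sum_erase univ (fun j => x j * y j) (mem_univ t)).symm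
    rw [sum_eq_zero (s := univ.erase t) fun j hj => by rw [hyj j hj, mul_zero], add_zero]
      at hsplit
    linarith
  have hp0 : (p : ℝ) ≠ 0 := by positivity
  refine eq_vertex hxtp (by rw [eq_div_iff hp0, mul_comm, ← hxtp, hyt]) (fun j hjt => ?_)
    fun j hjt => hyj j (mem_erase.2 ⟨hjt, mem_univ j⟩)
  have := hdj j (mem_erase.2 ⟨hjt, mem_univ j⟩)
  split_ifs at this ⊢ <;> linarith

end Vertex

section Rigid

variable {r : ℝ} {u : Fin n → ℕ} {x y : Fin n → ℝ}

theorem eq_zero_of_perturb_snd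
    (hw : (x, y) ∈ (convexHull ℝ (bilinearCoverSet r u)).extremePoints ℝ) {c : Fin n → ℝ}
    (hc : ∀ i, |c i| ≤ y i) (hxc : |∑ i, x i * c i| ≤ ∑ i, x i * y i - r) : c = 0 := by
  obtain ⟨hint, -, hxu, -⟩ := mem_bilinearCoverSet.1 (extremePoints_convexHull_subset hw)
  have hmem : ∀ c' : Fin n → ℝ, (∀ i, 0 ≤ y i + c' i) → r ≤ ∑ i, x i * y i + ∑ i, x i * c' i →
      (x, y + c') ∈ convexHull ℝ (bilinearCoverSet r u) := fun c' hc' hsum' =>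
    subset_convexHull ℝ _ ⟨hint, hc', hxu, by simpa [mul_add, sum_add_distrib] using hsum'⟩
  have h₁ := hmem c (fun i => by linarith [neg_abs_le (c i), hc i])
    (by linarith [neg_abs_le (∑ i, x i * c i)])
  have h₂ := hmem (-c) (fun i => by linarith [le_abs_self (c i), hc i, Pi.neg_apply c i])
    (by simp only [Pi.neg_apply, mul_neg, sum_neg_distrib]; linarith [le_abs_self (∑ i, x i * c i)])
  have := eq_zero_of_add_mem_of_sub_mem_of_mem_extremePoints (d := ((0 : Fin n → ℝ), c)) hw
    (by simpa using h₁) (by simpa [sub_eq_add_neg] using h₂)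
  exact congrArg Prod.snd this

theorem sum_mul_eq_of_mem_extremePoints (hr : 0 < r)
    (hw : (x, y) ∈ (convexHull ℝ (bilinearCoverSet r u)).extremePoints ℝ) :
    ∑ i, x i * y i = r := by
  obtain ⟨-, hy, -, hsum⟩ := mem_bilinearCoverSet.1 (extremePoints_convexHull_subset hw)
  set s := ∑ i, x i * y i
  have hs : 0 < s := hr.trans_le hsum
  have hθ : 0 ≤ 1 - r / s := by rw [sub_nonneg, div_le_one hs]; exact hsum
  have hθ' : 1 - r / s ≤ 1 := by have := div_pos hr hs; linarith
  have hxc : ∑ i, x i * ((1 - r / s) • y) i = s - r := by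
    simp only [Pi.smul_apply, smul_eq_mul, mul_left_comm _ (1 - r / s), ← mul_sum]
    change (1 - r / s) * s = s - r
    field_simp
  have hc := eq_zero_of_perturb_snd hw (c := (1 - r / s) • y)
    (fun i => by
      rw [Pi.smul_apply, smul_eq_mul, abs_mul, abs_of_nonneg hθ, abs_of_nonneg (hy i)]
      exact mul_le_of_le_one_left (hy i) hθ')
    (by rw [hxc, abs_of_nonneg (by linarith)])
  rw [hc] at hxc
  simp only [Pi.zero_apply, mul_zero, sum_const_zero] at hxc
  linarith

theorem fst_ne_zero_of_mem_extremePoints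
    (hw : (x, y) ∈ (convexHull ℝ (bilinearCoverSet r u)).extremePoints ℝ) {j : Fin n}
    (hyj : 0 < y j) : x j ≠ 0 := by
  obtain ⟨-, hy, -, hsum⟩ := mem_bilinearCoverSet.1 (extremePoints_convexHull_subset hw)
  intro hxj
  have hc := eq_zero_of_perturb_snd hw (c := Pi.single j (y j))
    (fun i => by
      rcases eq_or_ne i j with rfl | hij
      · simp [abs_of_pos hyj]
      · simp [hij, hy i])
    (by rw [sum_mul_single, hxj, zero_mul, abs_zero]; linarith)
  simpa [hyj.ne'] using congrFun hc j

theorem eq_of_mem_extremePoints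
    (hw : (x, y) ∈ (convexHull ℝ (bilinearCoverSet r u)).extremePoints ℝ) {j k : Fin n}
    (hj : 0 < y j) (hk : 0 < y k) : j = k := by
  have hw' := extremePoints_convexHull_subset hw
  obtain ⟨-, hy, -, hsum⟩ := mem_bilinearCoverSet.1 hw'
  by_contra hjk
  have hxj := (fst_nonneg_of_mem_bilinearCoverSet hw' j).lt_of_ne'
    (fst_ne_zero_of_mem_extremePoints hw hj)
  have hxk := (fst_nonneg_of_mem_bilinearCoverSet hw' k).lt_of_ne'
    (fst_ne_zero_of_mem_extremePoints hw hk)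
  -- moving weight between `y j` and `y k` so that `x j y j + x k y k` stays fixed
  set θ := min (y j / x k) (y k / x j)
  have hθ : 0 < θ := lt_min (div_pos hj hxk) (div_pos hk hxj)
  have hθj : θ * x k ≤ y j := (le_div_iff₀ hxk).1 (min_le_left _ _)
  have hθk : θ * x j ≤ y k := (le_div_iff₀ hxj).1 (min_le_right _ _)
  have hc := eq_zero_of_perturb_snd hw (c := Pi.single j (θ * x k) - Pi.single k (θ * x j))
    (fun i => by
      rcases eq_or_ne i j with rfl | hij
      · simp [hjk, abs_of_pos (mul_pos hθ hxk), hθj]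
      · rcases eq_or_ne i k with rfl | hik
        · simp [hij, abs_of_pos (mul_pos hθ hxj), hθk]
        · simp [hij, hik, hy i])
    (by
      simp only [Pi.sub_apply, mul_sub, sum_sub_distrib, sum_mul_single]
      rw [show x j * (θ * x k) - x k * (θ * x j) = 0 by ring, abs_zero]
      linarith)
  simpa [hjk, hθ.ne', hxk.ne'] using congrFun hc j

theorem add_single_mem_bilinearCoverSet (hw : (x, y) ∈ bilinearCoverSet r u) {j : Fin n}
    (hyj : y j = 0) {a : ℝ} (hint : ∃ m : ℕ, x j + a = m) (hle : x j + a ≤ u j) :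
    (x + Pi.single j a, y) ∈ bilinearCoverSet r u := by
  obtain ⟨hint', hy, hxu, hsum⟩ := mem_bilinearCoverSet.1 hw
  refine ⟨fun i => ?_, hy, fun i => ?_, ?_⟩
  · rcases eq_or_ne i j with rfl | hij
    · simpa using hint
    · simpa [hij] using hint' i
  · rcases eq_or_ne i j with rfl | hij
    · simpa using hle
    · simpa [hij] using hxu i
  · simp only [Pi.add_apply, add_mul, sum_add_distrib]
    rw [show ∑ i, (Pi.single j a : Fin n → ℝ) i * y i = 0 by simp [Pi.single_apply, hyj],
      add_zero]
    exact hsum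

theorem fst_eq_zero_or_eq_of_mem_extremePoints
    (hw : (x, y) ∈ (convexHull ℝ (bilinearCoverSet r u)).extremePoints ℝ) {j : Fin n}
    (hyj : y j = 0) : x j = 0 ∨ x j = u j := by
  have hw' := extremePoints_convexHull_subset hw
  obtain ⟨hint, -, hxu, -⟩ := mem_bilinearCoverSet.1 hw'
  obtain ⟨m, hm⟩ := hint j
  have hmu : (m : ℝ) ≤ u j := hm ▸ hxu j
  rw [hm]
  by_contra! h
  obtain ⟨hm0, hmu'⟩ : m ≠ 0 ∧ m ≠ u j := by exact_mod_cast h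
  have hm1 : m + 1 ≤ u j := by
    have : m ≤ u j := by exact_mod_cast hmu
    omega
  have h₁ := add_single_mem_bilinearCoverSet hw' hyj (a := 1)
    ⟨m + 1, by rw [hm, Nat.cast_succ]⟩ (by rw [hm]; exact_mod_cast hm1)
  have h₂ := add_single_mem_bilinearCoverSet hw' hyj (a := -1)
    ⟨m - 1, by rw [hm, Nat.cast_sub (by omega), Nat.cast_one, sub_eq_add_neg]⟩
    (by rw [hm]; linarith)
  have := eq_zero_of_add_mem_of_sub_mem_of_mem_extremePoints (d := (Pi.single j (1 : ℝ), 0)) hw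
    (subset_convexHull ℝ _ (by simpa using h₁))
    (subset_convexHull ℝ _ (by simpa [sub_eq_add_neg, Pi.single_neg] using h₂))
  simpa using congrFun (congrArg Prod.fst this) j

end Rigid

theorem exists_vertexIndex_of_mem_extremePoints {r : ℝ} (hr : 0 < r) {u : Fin n → ℕ}
    {x y : Fin n → ℝ} (hw : (x, y) ∈ (convexHull ℝ (bilinearCoverSet r u)).extremePoints ℝ) :
    ∃ i ∈ vertexIndex u, vertex r u i.1 i.2.1 i.2.2 = (x, y) := by
  obtain ⟨hint, hy, hxu, -⟩ := mem_bilinearCoverSet.1 (extremePoints_convexHull_subset hw)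
  have hsum := sum_mul_eq_of_mem_extremePoints hr hw
  obtain ⟨t, ht⟩ : ∃ t, 0 < y t := by
    by_contra! h
    have : ∑ i, x i * y i = 0 :=
      sum_eq_zero fun i _ => by rw [le_antisymm (h i) (hy i), mul_zero]
    linarith
  have hyj : ∀ j ≠ t, y j = 0 := fun j hjt =>
    le_antisymm (not_lt.1 fun hj => hjt (eq_of_mem_extremePoints hw hj ht)) (hy j)
  obtain ⟨m, hm⟩ := hint t
  have hm0 : m ≠ 0 := fun h0 => fst_ne_zero_of_mem_extremePoints hw ht (by simp [hm, h0])
  have hxy : x t * y t = r := by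
    rw [← hsum, ← add_sum_erase _ _ (mem_univ t),
      sum_eq_zero fun j hj => by rw [hyj j (ne_of_mem_erase hj), mul_zero], add_zero]
  refine ⟨⟨t, m, (univ.erase t).filter fun j => x j = u j⟩, ?_, ?_⟩
  · have : (m : ℝ) ≤ u t := hm ▸ hxu t
    simp only [vertexIndex, mem_sigma, mem_univ, mem_product, mem_Icc, mem_powerset, true_and]
    exact ⟨⟨Nat.one_le_iff_ne_zero.2 hm0, by exact_mod_cast this⟩, filter_subset _ _⟩
  · have hm0' : (m : ℝ) ≠ 0 := by positivity
    refine (eq_vertex hm (by rw [eq_div_iff hm0', mul_comm, ← hm, hxy]) (fun j hjt => ?_)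
      hyj).symm
    by_cases hxj : x j = u j
    · simp [hjt, hxj]
    · simpa [hxj] using
        (fst_eq_zero_or_eq_of_mem_extremePoints hw (hyj j hjt)).resolve_right hxj

theorem extremePoints_convexHull_bilinearCoverSet {r : ℝ} (hr : 0 < r) {u : Fin n → ℕ} :
    (convexHull ℝ (bilinearCoverSet r u)).extremePoints ℝ =
      (vertexIndex u).image fun i => vertex r u i.1 i.2.1 i.2.2 := by
  ext w
  rw [coe_image]
  constructor
  · obtain ⟨x, y⟩ := w
    exact exists_vertexIndex_of_mem_extremePoints hr
  · rintro ⟨⟨t, p, J⟩, hi, rfl⟩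
    have hp : p ∈ Icc 1 (u t) := (mem_product.1 (mem_sigma.1 hi).2).1
    exact mem_extremePoints_convexHull_of_forall_le_imp_eq (vertexFunctional r u t p J)
      (vertex_mem_bilinearCoverSet hr.le hp J) fun ⟨x, y⟩ hw hle =>
        eq_vertex_of_vertexFunctional_le hr (mem_Icc.1 hp).1 hw hle

end BilinearCover

theorem stmt_9_general (n : ℕ) (r : ℝ) (hr : 0 < r)
    (u : Fin n → ℕ) (hu : ∀ i, 1 ≤ u i)
    (SU : Set ((Fin n → ℝ) × (Fin n → ℝ)))
    (hSU : SU = {p | (∀ i, ∃ m : ℕ, p.1 i = (m : ℝ)) ∧ (∀ i, 0 ≤ p.2 i) ∧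
      (∀ i, p.1 i ≤ (u i : ℝ)) ∧ r ≤ ∑ i, p.1 i * p.2 i}) :
    ((convexHull ℝ SU).extremePoints ℝ).ncard = 2 ^ (n - 1) * ∑ i, u i := by
  obtain rfl : SU = bilinearCoverSet r u := hSU
  rw [extremePoints_convexHull_bilinearCoverSet hr, Set.ncard_coe_finset,
    card_image_of_injOn (vertex_injOn hr.ne' hu), card_vertexIndex]

theorem stmt_9 (n : ℕ) (hn : 1 ≤ n) (r : ℝ) (hr : 0 < r)
    (u : Fin n → ℕ) (hu : ∀ i, 1 ≤ u i)
    (SU : Set ((Fin n → ℝ) × (Fin n → ℝ)))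
    (hSU : SU = {p | (∀ i, ∃ m : ℕ, p.1 i = (m : ℝ)) ∧ (∀ i, 0 ≤ p.2 i) ∧
      (∀ i, p.1 i ≤ (u i : ℝ)) ∧ r ≤ ∑ i, p.1 i * p.2 i}) :
    ((convexHull ℝ SU).extremePoints ℝ).ncard = 2 ^ (n - 1) * ∑ i, u i :=
  stmt_9_general n r hr u hu SU hSU
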